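/- For every p ∈ ℝ³ with p ≠ 0 one has the matrix identity (M⁻·p)² = 4|p|² P₊(p); consequently, for every f ∈ D(M⁻·p̂) one has the norm equality ∫ |p|² |P₊(p) f̂(p)|² dp = (1/4) ∫ |(M⁻·p) f̂(p)|² dp, i.e. ‖ −i∇(P₊ f) ‖ = ‖ (1/2)(M⁻·p̂) f ‖ (up to the normalization of the Fourier transform). -/

import Mathlib

noncomputable section
open MeasureTheory Matrix Complex Filter Topology
open scoped Kronecker ENNReal InnerProductSpace RealInnerProductSpace

/-- Pauli matrices -/
def σ1 : Matrix (Fin 2) (Fin 2) ℂ := !![0, 1; 1, 0]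
def σ2 : Matrix (Fin 2) (Fin 2) ℂ := !![0, -I; I, 0]
def σ3 : Matrix (Fin 2) (Fin 2) ℂ := !![1, 0; 0, -1]

/-- Dirac alpha matrices in standard representation -/
def diracAlpha' (s : Matrix (Fin 2) (Fin 2) ℂ) : Matrix (Fin 4) (Fin 4) ℂ :=
  Matrix.reindex finSumFinEquiv finSumFinEquiv (Matrix.fromBlocks 0 s s 0)

def diracAlpha : Fin 3 → Matrix (Fin 4) (Fin 4) ℂ
  | 0 => diracAlpha' σ1
  | 1 => diracAlpha' σ2
  | 2 => diracAlpha' σ3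

def diracBeta : Matrix (Fin 4) (Fin 4) ℂ :=
  Matrix.reindex finSumFinEquiv finSumFinEquiv
    (Matrix.fromBlocks (1 : Matrix (Fin 2) (Fin 2) ℂ) 0 0 (-1 : Matrix (Fin 2) (Fin 2) ℂ))

abbrev R3 := EuclideanSpace ℝ (Fin 3)
abbrev C16 := EuclideanSpace ℂ (Fin 16)

/-- α·p -/
def alphaDot (p : R3) : Matrix (Fin 4) (Fin 4) ℂ :=
  ∑ j : Fin 3, (p j : ℂ) • diracAlpha j

/-- reindexing 4×4 Kronecker products to 16×16 matrices -/
def kron16 (A B : Matrix (Fin 4) (Fin 4) ℂ) : Matrix (Fin 16) (Fin 16) ℂ :=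
  Matrix.reindex finProdFinEquiv finProdFinEquiv (A ⊗ₖ B)

/-- M⁻·p -/
def Mminus (p : R3) : Matrix (Fin 16) (Fin 16) ℂ :=
  kron16 (alphaDot p) 1 - kron16 1 (alphaDot p)

/-- P·M⁺ -/
def MplusDot (P : R3) : Matrix (Fin 16) (Fin 16) ℂ :=
  (2⁻¹ : ℂ) • (kron16 (alphaDot P) 1 + kron16 1 (alphaDot P))

/-- τ(p) -/
def tau (p : R3) : Matrix (Fin 16) (Fin 16) ℂ :=
  -((‖p‖ ^ 2 : ℝ) : ℂ)⁻¹ • kron16 (alphaDot p) (alphaDot p)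

def Pplus (p : R3) : Matrix (Fin 16) (Fin 16) ℂ := (2⁻¹ : ℂ) • (1 + tau p)
def Pminus (p : R3) : Matrix (Fin 16) (Fin 16) ℂ := (2⁻¹ : ℂ) • (1 - tau p)

def Bmat : Matrix (Fin 16) (Fin 16) ℂ := (2 : ℂ) • kron16 diracBeta diracBeta

/-!
The Pauli matrices, hence the Dirac matrices `αⱼ`, satisfy the Clifford relations
`αᵢαⱼ + αⱼαᵢ = 2δᵢⱼ`, so `(α·p)² = |p|²`. Expanding `(α·p ⊗ 1 - 1 ⊗ α·p)²` gives
`2|p|² - 2 α·p ⊗ α·p = 4|p|² P₊(p)`. Since `M⁻·p` is Hermitian and `P₊(p)` is a Hermitian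
projection (`τ(p)² = 1`), pointwise
`‖(M⁻·p)x‖² = ⟪x, (M⁻·p)²x⟫ = 4|p|² ⟪x, P₊(p)x⟫ = 4|p|² ‖P₊(p)x‖²`,
which integrates to the norm identity; at `p = 0` both sides vanish since `M⁻·0 = 0`.
-/

theorem sum_smul_mul_self_of_anticomm {ι K A : Type*} [Fintype ι] [DecidableEq ι] [Field K]
    [NeZero (2 : K)] [Ring A] [Algebra K A] (a : ι → A)
    (ha : ∀ i j, a i * a j + a j * a i = (if i = j then 2 else 0 : K) • 1) (c : ι → K) :
    (∑ i, c i • a i) * (∑ i, c i • a i) = (∑ i, c i ^ 2) • 1 := by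
  have hsq : (∑ i, c i • a i) * (∑ i, c i • a i) = ∑ i, ∑ j, (c i * c j) • (a i * a j) := by
    simp only [Finset.sum_mul_sum, smul_mul_smul_comm]
  have h2 : (2 : K) • ((∑ i, c i • a i) * (∑ i, c i • a i)) = (2 : K) • (∑ i, c i ^ 2) • 1 := by
    calc (2 : K) • ((∑ i, c i • a i) * (∑ i, c i • a i))
        = ∑ i, ∑ j, (c i * c j) • (a i * a j + a j * a i) := by
          rw [two_smul, hsq]
          simp only [smul_add, Finset.sum_add_distrib]
          congr 1
          rw [Finset.sum_comm]
          exact Finset.sum_congr rfl fun i _ => Finset.sum_congr rfl fun j _ => by rw [mul_comm]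
      _ = ∑ i, (2 * c i ^ 2) • (1 : A) := by
          simp only [ha, ite_smul, zero_smul, smul_ite, smul_zero, Finset.sum_ite_eq,
            Finset.mem_univ, if_true, smul_smul]
          congr! 2
          ring
      _ = (2 : K) • (∑ i, c i ^ 2) • 1 := by
          rw [smul_smul, Finset.mul_sum, Finset.sum_smul]
  exact smul_right_injective A two_ne_zero h2

lemma isIdempotentElem_two_inv_smul_one_add {K A : Type*} [Field K] [NeZero (2 : K)] [Ring A]
    [Algebra K A] {t : A} (ht : t * t = 1) : IsIdempotentElem ((2⁻¹ : K) • (1 + t)) := by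
  have h2 : (1 + t) * (1 + t) = (2 : K) • (1 + t) := by
    simp only [add_mul, mul_add, one_mul, mul_one, ht, two_smul]
    abel
  rw [IsIdempotentElem, smul_mul_smul_comm, h2, smul_smul, mul_assoc, inv_mul_cancel₀ two_ne_zero,
    mul_one]

section Hermitian

variable {𝕜 n : Type*} [RCLike 𝕜] [Fintype n] [DecidableEq n]

lemma Matrix.IsHermitian.norm_toEuclideanLin_sq {A : Matrix n n 𝕜} (hA : A.IsHermitian)
    (x : EuclideanSpace 𝕜 n) :
    ‖A.toEuclideanLin x‖ ^ 2 = RCLike.re ⟪x, (A * A).toEuclideanLin x⟫_𝕜 := by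
  rw [@norm_sq_eq_re_inner 𝕜, isSymmetric_toEuclideanLin_iff.mpr hA, toLpLin_mul_same,
    LinearMap.comp_apply]

lemma Matrix.norm_toEuclideanLin_sq_eq_of_mul_self_eq {A B : Matrix n n 𝕜} (hA : A.IsHermitian)
    (hB : B.IsHermitian) (hBB : IsIdempotentElem B) {c : ℝ} (h : A * A = (c : 𝕜) • B)
    (x : EuclideanSpace 𝕜 n) :
    ‖A.toEuclideanLin x‖ ^ 2 = c * ‖B.toEuclideanLin x‖ ^ 2 := by
  rw [hA.norm_toEuclideanLin_sq, hB.norm_toEuclideanLin_sq, hBB.eq, h, map_smul,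
    LinearMap.smul_apply, inner_smul_right, RCLike.re_ofReal_mul]

end Hermitian

def pauli : Fin 3 → Matrix (Fin 2) (Fin 2) ℂ := ![σ1, σ2, σ3]

lemma diracAlpha_eq_diracAlpha'_pauli (j : Fin 3) : diracAlpha j = diracAlpha' (pauli j) := by
  fin_cases j <;> rfl

lemma pauli_anticomm (i j : Fin 3) :
    pauli i * pauli j + pauli j * pauli i = (if i = j then 2 else 0 : ℂ) • 1 := by
  fin_cases i <;> fin_cases j <;> ext a b <;> fin_cases a <;> fin_cases b <;>
    simp [pauli, σ1, σ2, σ3, one_add_one_eq_two]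

lemma pauli_isHermitian (j : Fin 3) : (pauli j).IsHermitian := by
  fin_cases j <;> ext a b <;> fin_cases a <;> fin_cases b <;> simp [pauli, σ1, σ2, σ3]

lemma diracAlpha'_anticomm {s t : Matrix (Fin 2) (Fin 2) ℂ} {c : ℂ} (h : s * t + t * s = c • 1) :
    diracAlpha' s * diracAlpha' t + diracAlpha' t * diracAlpha' s = c • 1 := by
  have hblock : fromBlocks (c • 1 : Matrix (Fin 2) (Fin 2) ℂ) 0 0 (c • 1) =
      c • (1 : Matrix (Fin 2 ⊕ Fin 2) (Fin 2 ⊕ Fin 2) ℂ) := by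
    rw [← fromBlocks_one, fromBlocks_smul, smul_zero]
  simp only [diracAlpha', ← coe_reindexAlgEquiv ℂ ℂ, ← map_mul, ← map_add, fromBlocks_multiply,
    fromBlocks_add, mul_zero, zero_mul, add_zero, zero_add]
  rw [h, hblock, map_smul, map_one]

lemma diracAlpha'_isHermitian {s : Matrix (Fin 2) (Fin 2) ℂ} (hs : s.IsHermitian) :
    (diracAlpha' s).IsHermitian := by
  simp [diracAlpha', IsHermitian, conjTranspose_submatrix, fromBlocks_conjTranspose, hs.eq]

lemma diracAlpha_anticomm (i j : Fin 3) :
    diracAlpha i * diracAlpha j + diracAlpha j * diracAlpha i =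
      (if i = j then 2 else 0 : ℂ) • 1 := by
  rw [diracAlpha_eq_diracAlpha'_pauli, diracAlpha_eq_diracAlpha'_pauli]
  exact diracAlpha'_anticomm (pauli_anticomm i j)

lemma alphaDot_mul_self (p : R3) : alphaDot p * alphaDot p = ((‖p‖ ^ 2 : ℝ) : ℂ) • 1 := by
  rw [alphaDot, sum_smul_mul_self_of_anticomm diracAlpha diracAlpha_anticomm,
    EuclideanSpace.norm_sq_eq]
  simp [sq_abs]

lemma alphaDot_isHermitian (p : R3) : (alphaDot p).IsHermitian := by
  refine isSelfAdjoint_sum _ fun j _ => ?_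
  rw [diracAlpha_eq_diracAlpha'_pauli]
  exact (diracAlpha'_isHermitian (pauli_isHermitian j)).smul (Complex.conj_ofReal _)

lemma kron16_mul (A B C D : Matrix (Fin 4) (Fin 4) ℂ) :
    kron16 A B * kron16 C D = kron16 (A * C) (B * D) := by
  simp only [kron16, ← coe_reindexAlgEquiv ℂ ℂ, ← map_mul, mul_kronecker_mul]

lemma kron16_one : kron16 1 1 = 1 := by
  simp only [kron16, ← coe_reindexAlgEquiv ℂ ℂ, one_kronecker_one, map_one]

lemma kron16_smul_left (c : ℂ) (A B : Matrix (Fin 4) (Fin 4) ℂ) :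
    kron16 (c • A) B = c • kron16 A B := by
  simp only [kron16, ← coe_reindexAlgEquiv ℂ ℂ, smul_kronecker, map_smul]

lemma kron16_smul_right (c : ℂ) (A B : Matrix (Fin 4) (Fin 4) ℂ) :
    kron16 A (c • B) = c • kron16 A B := by
  simp only [kron16, ← coe_reindexAlgEquiv ℂ ℂ, kronecker_smul, map_smul]

lemma Matrix.IsHermitian.kron16 {A B : Matrix (Fin 4) (Fin 4) ℂ} (hA : A.IsHermitian)
    (hB : B.IsHermitian) : (kron16 A B).IsHermitian := by
  rw [IsHermitian, _root_.kron16, reindex_apply, conjTranspose_submatrix, conjTranspose_kronecker,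
    hA.eq, hB.eq]

lemma Mminus_zero : Mminus 0 = 0 := by
  simp [Mminus, kron16, alphaDot]

lemma Mminus_isHermitian (p : R3) : (Mminus p).IsHermitian :=
  ((alphaDot_isHermitian p).kron16 isHermitian_one).sub
    (isHermitian_one.kron16 (alphaDot_isHermitian p))

lemma Mminus_mul_self (p : R3) : Mminus p * Mminus p =
    (2 : ℂ) • (((‖p‖ ^ 2 : ℝ) : ℂ) • 1 - kron16 (alphaDot p) (alphaDot p)) := by
  simp only [Mminus, sub_mul, mul_sub, kron16_mul, one_mul, mul_one, alphaDot_mul_self,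
    kron16_smul_left, kron16_smul_right, kron16_one]
  module

lemma tau_isHermitian (p : R3) : (tau p).IsHermitian :=
  ((alphaDot_isHermitian p).kron16 (alphaDot_isHermitian p)).smul
    (by simp [IsSelfAdjoint, Complex.conj_ofReal])

lemma tau_mul_self {p : R3} (hp : p ≠ 0) : tau p * tau p = 1 := by
  have hp2 : ((‖p‖ ^ 2 : ℝ) : ℂ) ≠ 0 := by simpa using hp
  rw [tau, smul_mul_smul_comm, kron16_mul, alphaDot_mul_self, kron16_smul_left, kron16_smul_right,
    kron16_one, smul_smul, smul_smul]
  field_simp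
  simp

lemma Pplus_isHermitian (p : R3) : (Pplus p).IsHermitian :=
  (isHermitian_one.add (tau_isHermitian p)).smul (by simp [IsSelfAdjoint])

lemma Pplus_isIdempotentElem {p : R3} (hp : p ≠ 0) : IsIdempotentElem (Pplus p) :=
  isIdempotentElem_two_inv_smul_one_add (tau_mul_self hp)

lemma Mminus_mul_self_eq_smul_Pplus {p : R3} (hp : p ≠ 0) :
    Mminus p * Mminus p = ((4 * ‖p‖ ^ 2 : ℝ) : ℂ) • Pplus p := by
  have hc : ((‖p‖ ^ 2 : ℝ) : ℂ) ≠ 0 := by simpa using hp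
  rw [Mminus_mul_self, Pplus, tau, smul_smul, smul_add, smul_smul, Complex.ofReal_mul,
    Complex.ofReal_ofNat]
  generalize ((‖p‖ ^ 2 : ℝ) : ℂ) = c at hc ⊢
  rw [show 4 * c * 2⁻¹ * -c⁻¹ = -2 by field_simp; norm_num]
  module

lemma norm_sq_mul_norm_Pplus_sq (p : R3) (x : C16) :
    ‖p‖ ^ 2 * ‖(Pplus p).toEuclideanLin x‖ ^ 2 = 1 / 4 * ‖(Mminus p).toEuclideanLin x‖ ^ 2 := by
  rcases eq_or_ne p 0 with rfl | hp
  · simp [Mminus_zero]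
  · rw [norm_toEuclideanLin_sq_eq_of_mul_self_eq (Mminus_isHermitian p) (Pplus_isHermitian p)
      (Pplus_isIdempotentElem hp) (c := 4 * ‖p‖ ^ 2) (Mminus_mul_self_eq_smul_Pplus hp)]
    ring

/-- STATEMENT 6: `(M⁻·p)² = 4|p|² P₊(p)` for `p ≠ 0`, and for every `f` in the maximal domain
of `M⁻·p̂` (represented in momentum space by `g = f̂ ∈ L²` with `p ↦ (M⁻·p)g(p) ∈ L²`) one has
`∫ |p|²|P₊(p)g(p)|² dp = (1/4)∫ |(M⁻·p)g(p)|² dp`, i.e.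
`‖−i∇ (P₊f)‖ = ‖(1/2)(M⁻·p̂)f‖`. -/
theorem stmt6 :
    (∀ p : R3, p ≠ 0 → Mminus p * Mminus p = ((4 * ‖p‖ ^ 2 : ℝ) : ℂ) • Pplus p) ∧
    ∀ g : R3 → C16, MeasureTheory.MemLp g 2 volume →
      MeasureTheory.MemLp (fun p => Matrix.toEuclideanLin (Mminus p) (g p)) 2 volume →
      ∫ p : R3, ‖p‖ ^ 2 * ‖Matrix.toEuclideanLin (Pplus p) (g p)‖ ^ 2
        = (1 / 4) * ∫ p : R3, ‖Matrix.toEuclideanLin (Mminus p) (g p)‖ ^ 2 := by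
  refine ⟨fun p hp => Mminus_mul_self_eq_smul_Pplus hp, fun g _ _ => ?_⟩
  simp_rw [norm_sq_mul_norm_Pplus_sq]
  exact integral_const_mul _ _
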